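/- Let F be a continuous CDF and F_0 a continuous CDF with F ≠ F_0, and let q be a strictly positive bounded-below-on-compacts function on (0,1) (i.e., inf_{ε ≤ u ≤ 1−ε} q(u) > 0 for all 0 < ε < 1/2). If X_1, X_2, … are i.i.d. with CDF F and 𝔽_n is their empirical distribution function, then T_n(q) = sup_{0 < F_0(t) < 1} √n |𝔽_n(t) − F_0(t)| / q(F_0(t)) converges to +∞ in probability as n → ∞. -/

import Mathlib

/-!
At a single point `t₀` with `0 < F₀ t₀ < 1` and `F t₀ ≠ F₀ t₀` the strong law of large numbers
gives `𝔽ₙ(t₀) → F(t₀)` almost surely, hence in probability. On the event `T_n(q) ≤ M` we have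
`|𝔽ₙ(t₀) - F₀(t₀)| ≤ M q(F₀ t₀) / √n → 0`, so this event forces `𝔽ₙ(t₀)` to stay away from
`F(t₀)`, and its probability tends to zero.
-/

open MeasureTheory ProbabilityTheory Filter Real Set

open scoped Topology

section DistributionFunction

variable {F G : ℝ → ℝ}

theorem Monotone.mem_Icc_of_tendsto (hF : Monotone F) (h0 : Tendsto F atBot (𝓝 0))
    (h1 : Tendsto F atTop (𝓝 1)) (t : ℝ) : F t ∈ Icc 0 1 :=
  ⟨hF.le_of_tendsto h0 t, hF.ge_of_tendsto h1 t⟩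

theorem Ioo_subset_range_of_tendsto (hG : Continuous G) (h0 : Tendsto G atBot (𝓝 0))
    (h1 : Tendsto G atTop (𝓝 1)) : Ioo 0 1 ⊆ range G := fun _ hc =>
  mem_range_of_exists_le_of_exists_ge hG (h0.eventually (eventually_le_nhds hc.1)).exists
    (h1.eventually (eventually_ge_nhds hc.2)).exists

theorem exists_apply_mem_Ioo_and_ne (hF : Monotone F) (hF0 : Tendsto F atBot (𝓝 0))
    (hF1 : Tendsto F atTop (𝓝 1)) (hGc : Continuous G) (hG : Monotone G)
    (hG0 : Tendsto G atBot (𝓝 0)) (hG1 : Tendsto G atTop (𝓝 1)) (hne : F ≠ G) :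
    ∃ t, G t ∈ Ioo 0 1 ∧ F t ≠ G t := by
  obtain ⟨s, hs⟩ := Function.ne_iff.mp hne
  have hrange := Ioo_subset_range_of_tendsto hGc hG0 hG1
  obtain ⟨hFs0, hFs1⟩ := hF.mem_Icc_of_tendsto hF0 hF1 s
  obtain ⟨hGs0, hGs1⟩ := hG.mem_Icc_of_tendsto hG0 hG1 s
  rcases hGs0.eq_or_lt with hGs | hGs0
  · obtain ⟨c, hc0, hc⟩ := exists_between (lt_min (hFs0.lt_of_ne' (hGs ▸ hs)) one_pos)
    have hc1 : c < 1 := hc.trans_le (min_le_right _ _)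
    obtain ⟨t, rfl⟩ := hrange ⟨hc0, hc1⟩
    have hst : s < t := hG.reflect_lt (hGs ▸ hc0)
    exact ⟨t, ⟨hc0, hc1⟩, (hc.trans_le ((min_le_left _ _).trans (hF hst.le))).ne'⟩
  rcases hGs1.lt_or_eq with hGs1 | hGs
  · exact ⟨s, ⟨hGs0, hGs1⟩, hs⟩
  · obtain ⟨c, hc, hc1⟩ := exists_between (max_lt (hFs1.lt_of_ne (hGs ▸ hs)) one_pos)
    have hc0 : 0 < c := (le_max_right _ _).trans_lt hc
    obtain ⟨t, rfl⟩ := hrange ⟨hc0, hc1⟩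
    have hts : t < s := hG.reflect_lt (hGs ▸ hc1)
    exact ⟨t, ⟨hc0, hc1⟩, ((hF hts.le).trans_lt ((le_max_left _ _).trans_lt hc)).ne⟩

end DistributionFunction

theorem pos_of_forall_Icc_uniformly_pos {q : ℝ → ℝ}
    (hq : ∀ ε : ℝ, 0 < ε → ε < 1 / 2 → ∃ c > 0, ∀ u ∈ Icc ε (1 - ε), c ≤ q u)
    {u : ℝ} (hu : u ∈ Ioo 0 1) : 0 < q u := by
  have hmin : 0 < min u (1 - u) := lt_min hu.1 (by linarith [hu.2])
  obtain ⟨c, hc0, hc⟩ := hq (min u (1 - u) / 2) (by linarith) (by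
    linarith [min_le_left u (1 - u), min_le_right u (1 - u)])
  exact hc0.trans_le (hc u ⟨by linarith [min_le_left u (1 - u)],
    by linarith [min_le_right u (1 - u)]⟩)

theorem identDistrib_of_measureReal_Iic_eq {Ω Ω' : Type*} [MeasurableSpace Ω]
    [MeasurableSpace Ω'] {μ : Measure Ω} {ν : Measure Ω'} [IsFiniteMeasure μ] [IsFiniteMeasure ν]
    {X : Ω → ℝ} {Y : Ω' → ℝ} (hX : Measurable X) (hY : Measurable Y)
    (h : ∀ t, μ.real {ω | X ω ≤ t} = ν.real {ω | Y ω ≤ t}) : IdentDistrib X Y μ ν := by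
  refine ⟨hX.aemeasurable, hY.aemeasurable, Measure.ext_of_Iic _ _ fun t => ?_⟩
  rw [Measure.map_apply hX measurableSet_Iic, Measure.map_apply hY measurableSet_Iic]
  exact (ENNReal.toReal_eq_toReal_iff' (measure_ne_top _ _) (measure_ne_top _ _)).mp (h t)

/-- The paper's `𝔽ₙ(t)`, built from the observations `X 0, …, X (n - 1)`. -/
noncomputable def empiricalCDF {Ω : Type*} (X : ℕ → Ω → ℝ) (n : ℕ) (ω : Ω) (t : ℝ) : ℝ :=
  (n : ℝ)⁻¹ * ∑ i ∈ Finset.range n, if X i ω ≤ t then 1 else 0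

section EmpiricalCDF

variable {Ω : Type*} [MeasurableSpace Ω] {μ : Measure Ω} {X : ℕ → Ω → ℝ}

theorem measurable_empiricalCDF (hX : ∀ i, Measurable (X i)) (n : ℕ) (t : ℝ) :
    Measurable fun ω => empiricalCDF X n ω t :=
  (Finset.measurable_sum _ fun i _ => Measurable.ite (measurableSet_le (hX i) measurable_const)
    measurable_const measurable_const).const_mul _

theorem ae_tendsto_empiricalCDF [IsFiniteMeasure μ] (hX : ∀ i, Measurable (X i))
    (hindep : Pairwise fun i j => IndepFun (X i) (X j) μ)
    (hident : ∀ i, IdentDistrib (X i) (X 0) μ μ) (t : ℝ) :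
    ∀ᵐ ω ∂μ, Tendsto (fun n => empiricalCDF X n ω t) atTop (𝓝 (μ.real {ω | X 0 ω ≤ t})) := by
  have hu : Measurable ((Iic t).indicator (1 : ℝ → ℝ)) :=
    measurable_one.indicator measurableSet_Iic
  have hslln := strong_law_ae_real (fun i => (Iic t).indicator 1 ∘ X i)
    ((integrable_const (1 : ℝ)).indicator (hX 0 measurableSet_Iic))
    (fun i j hij => (hindep hij).comp hu hu) (fun i => (hident i).comp hu)
  have hmean : ∫ ω, ((Iic t).indicator 1 ∘ X 0) ω ∂μ = μ.real {ω | X 0 ω ≤ t} :=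
    integral_indicator_one (hX 0 measurableSet_Iic)
  filter_upwards [hslln] with ω hω
  rw [hmean] at hω
  convert hω using 2 with n
  simp [empiricalCDF, inv_mul_eq_div, indicator_apply]

theorem tendstoInMeasure_empiricalCDF [IsFiniteMeasure μ] (hX : ∀ i, Measurable (X i))
    (hindep : Pairwise fun i j => IndepFun (X i) (X j) μ)
    (hident : ∀ i, IdentDistrib (X i) (X 0) μ μ) (t : ℝ) :
    TendstoInMeasure μ (fun n ω => empiricalCDF X n ω t) atTop
      fun _ => μ.real {ω | X 0 ω ≤ t} :=
  tendstoInMeasure_of_tendsto_ae (fun n => (measurable_empiricalCDF hX n t).aestronglyMeasurable)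
    (ae_tendsto_empiricalCDF hX hindep hident t)

end EmpiricalCDF

theorem MeasureTheory.TendstoInMeasure.tendsto_measure_mul_abs_sub_le {Ω ι : Type*}
    [MeasurableSpace Ω] {μ : Measure Ω} {l : Filter ι} {Z : ι → Ω → ℝ} {a p : ℝ}
    (hZ : TendstoInMeasure μ Z l fun _ => a) (hap : a ≠ p) {c : ι → ℝ}
    (hc : Tendsto c l atTop) (M : ℝ) :
    Tendsto (fun i => μ {ω | c i * |Z i ω - p| ≤ M}) l (𝓝 0) := by
  set δ := |a - p| / 2
  have hδ : 0 < δ := half_pos (abs_pos.mpr (sub_ne_zero.mpr hap))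
  refine tendsto_of_tendsto_of_tendsto_of_le_of_le' tendsto_const_nhds
    (tendstoInMeasure_iff_dist.mp hZ δ hδ) (.of_forall fun _ => bot_le) ?_
  filter_upwards [hc.eventually_gt_atTop (max (M / δ) 0)] with i hi
  refine measure_mono fun ω (hω : c i * |Z i ω - p| ≤ M) => ?_
  show δ ≤ dist (Z i ω) a
  rw [Real.dist_eq]
  by_contra! hlt
  have hfar : δ < |Z i ω - p| := by
    linarith [abs_sub_le a (Z i ω) p, abs_sub_comm a (Z i ω), show |a - p| = 2 * δ by ring]
  have hM : M < c i * δ := (div_lt_iff₀ hδ).mp ((le_max_left _ _).trans_lt hi)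
  nlinarith [(le_max_right (M / δ) 0).trans_lt hi]

theorem weighted_KS_consistency_general {Ω : Type*} [MeasurableSpace Ω]
    (μ : Measure Ω) [IsProbabilityMeasure μ]
    (F F₀ : ℝ → ℝ)
    (hFmono : Monotone F)
    (hF0 : Tendsto F atBot (nhds 0)) (hF1 : Tendsto F atTop (nhds 1))
    (hF₀cont : Continuous F₀) (hF₀mono : Monotone F₀)
    (hF₀0 : Tendsto F₀ atBot (nhds 0)) (hF₀1 : Tendsto F₀ atTop (nhds 1))
    (hne : F ≠ F₀)
    (q : ℝ → ℝ)
    (hq : ∀ ε : ℝ, 0 < ε → ε < 1/2 → ∃ c > 0, ∀ u ∈ Set.Icc ε (1 - ε), c ≤ q u)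
    (X : ℕ → Ω → ℝ) (hmeas : ∀ i, Measurable (X i))
    (hindep : iIndepFun X μ)
    (hcdf : ∀ i t, (μ {ω | X i ω ≤ t}).toReal = F t) :
    ∀ M : ℝ,
      Tendsto (fun n : ℕ =>
          (μ {ω | ∀ t : ℝ, 0 < F₀ t → F₀ t < 1 →
              Real.sqrt n *
                |(↑n)⁻¹ * ∑ i ∈ Finset.range n, (if X i ω ≤ t then (1:ℝ) else 0) - F₀ t|
                / q (F₀ t) ≤ M}).toReal)
        atTop (nhds 0) := by
  intro M
  obtain ⟨t₀, ht₀, hne₀⟩ :=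
    exists_apply_mem_Ioo_and_ne hFmono hF0 hF1 hF₀cont hF₀mono hF₀0 hF₀1 hne
  have hq₀ : 0 < q (F₀ t₀) := pos_of_forall_Icc_uniformly_pos hq ht₀
  have hident : ∀ i, IdentDistrib (X i) (X 0) μ μ := fun i =>
    identDistrib_of_measureReal_Iic_eq (hmeas i) (hmeas 0) fun t =>
      (hcdf i t).trans (hcdf 0 t).symm
  have hconv : TendstoInMeasure μ (fun n ω => empiricalCDF X n ω t₀) atTop fun _ => F t₀ :=
    hcdf 0 t₀ ▸ tendstoInMeasure_empiricalCDF hmeas (fun _ _ hij => hindep.indepFun hij) hident t₀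
  have hscale : Tendsto (fun n : ℕ => √n / q (F₀ t₀)) atTop atTop :=
    (tendsto_sqrt_atTop.comp tendsto_natCast_atTop_atTop).atTop_div_const hq₀
  have hlim := hconv.tendsto_measure_mul_abs_sub_le hne₀ hscale M
  refine (ENNReal.tendsto_toReal ENNReal.zero_ne_top).comp <|
    tendsto_of_tendsto_of_tendsto_of_le_of_le tendsto_const_nhds hlim (fun _ => bot_le)
      fun n => measure_mono fun ω hω => ?_
  have h := hω t₀ ht₀.1 ht₀.2
  rwa [mul_div_right_comm] at h

theorem weighted_KS_consistency {Ω : Type*} [MeasurableSpace Ω]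
    (μ : Measure Ω) [IsProbabilityMeasure μ]
    (F F₀ : ℝ → ℝ)
    (hFcont : Continuous F) (hFmono : Monotone F)
    (hF0 : Tendsto F atBot (nhds 0)) (hF1 : Tendsto F atTop (nhds 1))
    (hF₀cont : Continuous F₀) (hF₀mono : Monotone F₀)
    (hF₀0 : Tendsto F₀ atBot (nhds 0)) (hF₀1 : Tendsto F₀ atTop (nhds 1))
    (hne : F ≠ F₀)
    (q : ℝ → ℝ)
    (hq : ∀ ε : ℝ, 0 < ε → ε < 1/2 → ∃ c > 0, ∀ u ∈ Set.Icc ε (1 - ε), c ≤ q u)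
    (X : ℕ → Ω → ℝ) (hmeas : ∀ i, Measurable (X i))
    (hindep : iIndepFun X μ)
    (hcdf : ∀ i t, (μ {ω | X i ω ≤ t}).toReal = F t) :
    ∀ M : ℝ,
      Tendsto (fun n : ℕ =>
          (μ {ω | ∀ t : ℝ, 0 < F₀ t → F₀ t < 1 →
              Real.sqrt n *
                |(↑n)⁻¹ * ∑ i ∈ Finset.range n, (if X i ω ≤ t then (1:ℝ) else 0) - F₀ t|
                / q (F₀ t) ≤ M}).toReal)
        atTop (nhds 0) :=
  weighted_KS_consistency_general μ F F₀ hFmono hF0 hF1 hF₀cont hF₀mono hF₀0 hF₀1 hne q hq X hmeas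
    hindep hcdf
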